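/- If 1 ≤ p < 2 and G is a graph of order n, then ‖G‖_{S_p}^p ≤ 2^{-p} n^{1+p/2} + n^p. -/

import Mathlib

open Finset

/-- Singular values (unsorted) of a complex matrix: square roots of eigenvalues of `A * Aᴴ`. -/
noncomputable def svalC {m n : ℕ} (A : Matrix (Fin m) (Fin n) ℂ) : Fin m → ℝ :=
  fun i => Real.sqrt ((Matrix.isHermitian_mul_conjTranspose_self A).eigenvalues i)

/-- Singular values of a complex matrix sorted in decreasing order. -/
noncomputable def svalCSorted {m n : ℕ} (A : Matrix (Fin m) (Fin n) ℂ) : Fin m → ℝ :=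
  svalC A ∘ ⇑(Tuple.sort (fun i => -(svalC A i)))

/-- Singular values (unsorted) of a real matrix. -/
noncomputable def svalR {m n : ℕ} (A : Matrix (Fin m) (Fin n) ℝ) : Fin m → ℝ :=
  fun i => Real.sqrt ((Matrix.isHermitian_mul_conjTranspose_self A).eigenvalues i)

/-- Singular values of a real matrix sorted in decreasing order. -/
noncomputable def svalRSorted {m n : ℕ} (A : Matrix (Fin m) (Fin n) ℝ) : Fin m → ℝ :=
  svalR A ∘ ⇑(Tuple.sort (fun i => -(svalR A i)))

/-- Ky Fan `k`-norm of a complex matrix: the sum of its `k` largest singular values. -/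
noncomputable def kyFanC {m n : ℕ} (A : Matrix (Fin m) (Fin n) ℂ) (k : ℕ) : ℝ :=
  ∑ i : Fin m, if (i : ℕ) < k then svalCSorted A i else 0

/-- Ky Fan `k`-norm of a real matrix. -/
noncomputable def kyFanR {m n : ℕ} (A : Matrix (Fin m) (Fin n) ℝ) (k : ℕ) : ℝ :=
  ∑ i : Fin m, if (i : ℕ) < k then svalRSorted A i else 0

/-- The adjacency matrix of a simple graph is Hermitian (over `ℝ`). -/
lemma adjHerm {n : ℕ} (G : SimpleGraph (Fin n)) [DecidableRel G.Adj] :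
    (G.adjMatrix ℝ).IsHermitian := by
  have h := G.isSymm_adjMatrix (α := ℝ)
  first
  | (unfold Matrix.IsHermitian; rw [Matrix.conjTranspose_eq_transpose_of_trivial]; exact h)
  | simpa [Matrix.IsHermitian, Matrix.conjTranspose, Matrix.IsSymm, Matrix.transpose, Matrix.map, star_trivial] using h

/-- Singular values of a graph (unsorted). -/
noncomputable def gsval {n : ℕ} (G : SimpleGraph (Fin n)) [DecidableRel G.Adj] : Fin n → ℝ :=
  svalR (G.adjMatrix ℝ)

/-- Singular values of a graph sorted in decreasing order. -/
noncomputable def gsvalSorted {n : ℕ} (G : SimpleGraph (Fin n)) [DecidableRel G.Adj] : Fin n → ℝ :=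
  svalRSorted (G.adjMatrix ℝ)

/-- Eigenvalues of a graph sorted in decreasing order: `geigSorted G 0 = μ₁ ≥ ⋯ ≥ μₙ`. -/
noncomputable def geigSorted {n : ℕ} (G : SimpleGraph (Fin n)) [DecidableRel G.Adj] : Fin n → ℝ :=
  (adjHerm G).eigenvalues ∘ ⇑(Tuple.sort (fun i => -((adjHerm G).eigenvalues i)))

/-- Ky Fan `k`-norm of a graph. -/
noncomputable def kyFanG {n : ℕ} (G : SimpleGraph (Fin n)) [DecidableRel G.Adj] (k : ℕ) : ℝ :=
  kyFanR (G.adjMatrix ℝ) k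

/-!
Let `λᵢ` be the eigenvalues of `A Aᵀ = A²`, so that the singular values are `√λᵢ` and
`∑ λᵢ = tr A² = 2m ≤ n²`. Testing `A²` against the all-ones vector gives
`λ_max ≥ ‖A 𝟙‖² / n ≥ (2m)² / n²`, so the remaining eigenvalues sum to at most
`2m - (2m)² / n² ≤ n² / 4`. By concavity of `t ↦ t ^ (p/2)` they contribute at most
`n ^ (1 - p/2) (n² / 4) ^ (p/2) = 2^{-p} n ^ (1 + p/2)`, while `λ_max ^ (p/2) ≤ n ^ p`.
-/

open Matrix

theorem Real.sum_rpow_le_card_rpow_mul_rpow_sum {ι : Type*} (s : Finset ι) {f : ι → ℝ}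
    (hf : ∀ i ∈ s, 0 ≤ f i) {r : ℝ} (hr0 : 0 ≤ r) (hr1 : r ≤ 1) :
    ∑ i ∈ s, f i ^ r ≤ (#s : ℝ) ^ (1 - r) * (∑ i ∈ s, f i) ^ r := by
  rcases s.eq_empty_or_nonempty with rfl | hs
  · simp only [sum_empty]; positivity
  have hc : (0 : ℝ) < #s := by exact_mod_cast hs.card_pos
  have hjensen := (Real.concaveOn_rpow hr0 hr1).le_map_sum (t := s) (w := fun _ => (#s : ℝ)⁻¹)
    (p := f) (fun _ _ => by positivity) (by simp [hc.ne']) hf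
  simp only [smul_eq_mul, ← mul_sum] at hjensen
  rw [Real.mul_rpow (by positivity) (sum_nonneg hf), Real.inv_rpow hc.le] at hjensen
  rw [Real.rpow_sub hc, Real.rpow_one, div_mul_eq_mul_div, le_div_iff₀ (by positivity)]
  have := mul_le_mul_of_nonneg_left hjensen (by positivity : (0 : ℝ) ≤ #s * #s ^ r)
  field_simp at this
  linarith

open MatrixOrder in
theorem Matrix.IsHermitian.re_dotProduct_mulVec_le {𝕜 n : Type*} [RCLike 𝕜] [Fintype n]
    [DecidableEq n] {M : Matrix n n 𝕜} (hM : M.IsHermitian) (x : n → 𝕜) :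
    RCLike.re (star x ⬝ᵥ M *ᵥ x) ≤ (⨆ i, hM.eigenvalues i) * RCLike.re (star x ⬝ᵥ x) := by
  have h : M ≤ algebraMap ℝ _ (⨆ i, hM.eigenvalues i) := by
    refine le_algebraMap_of_spectrum_le fun y hy => ?_
    rw [hM.spectrum_real_eq_range_eigenvalues] at hy
    obtain ⟨i, rfl⟩ := hy
    exact le_ciSup (Set.finite_range _).bddAbove i
  have := (Matrix.le_iff.mp h).re_dotProduct_nonneg x
  rw [Algebra.algebraMap_eq_smul_one, sub_mulVec, smul_mulVec, one_mulVec,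
    dotProduct_sub, dotProduct_smul, map_sub, RCLike.real_smul_eq_coe_mul,
    RCLike.re_ofReal_mul] at this
  linarith

theorem Matrix.sq_sum_le_card_mul_card_mul_iSup_eigenvalues {m k : Type*} [Fintype m]
    [DecidableEq m] [Fintype k] (A : Matrix m k ℝ) :
    (∑ i, ∑ j, A i j) ^ 2 ≤
      Fintype.card m * Fintype.card k *
        ⨆ i, (isHermitian_mul_conjTranspose_self A).eigenvalues i := by
  have hray := (isHermitian_mul_conjTranspose_self A).re_dotProduct_mulVec_le 1
  have hcol : (1 : m → ℝ) ⬝ᵥ (A * Aᴴ) *ᵥ 1 = ∑ j, (∑ i, A i j) ^ 2 := by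
    rw [← mulVec_mulVec, dotProduct_mulVec, conjTranspose_eq_transpose_of_trivial,
      mulVec_transpose]
    simp [dotProduct, vecMul, sq]
  simp only [star_trivial, RCLike.re_to_real, hcol] at hray
  calc (∑ i, ∑ j, A i j) ^ 2 = (∑ j, ∑ i, A i j) ^ 2 := by rw [sum_comm]
    _ ≤ Fintype.card k * ∑ j, (∑ i, A i j) ^ 2 := by
        rw [← card_univ]; exact sq_sum_le_card_mul_sum_sq
    _ ≤ _ := by
        rw [mul_comm (Fintype.card m : ℝ), mul_assoc]
        gcongr
        simpa [dotProduct, mul_comm] using hray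

namespace SimpleGraph

variable {V : Type*} [Fintype V] (G : SimpleGraph V) [DecidableRel G.Adj]

theorem sum_adjMatrix_apply {α : Type*} [NonAssocSemiring α] :
    ∑ v, ∑ w, G.adjMatrix α v w = ∑ v, (G.degree v : α) := by
  simp [adjMatrix_apply, sum_boole, ← card_neighborFinset_eq_degree, neighborFinset_eq_filter]

theorem trace_adjMatrix_mul_conjTranspose {α : Type*} [NonAssocSemiring α] [Star α]
    [TrivialStar α] :
    (G.adjMatrix α * (G.adjMatrix α)ᴴ).trace = ∑ v, (G.degree v : α) := by
  simp only [conjTranspose_eq_transpose_of_trivial, transpose_adjMatrix, trace, diag_apply,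
    adjMatrix_mul_self_apply_self]

theorem sum_degree_le_card_sq : ∑ v, (G.degree v : ℝ) ≤ (Fintype.card V : ℝ) ^ 2 := by
  calc ∑ v, (G.degree v : ℝ) ≤ ∑ _v : V, (Fintype.card V : ℝ) :=
        sum_le_sum fun v _ => by exact_mod_cast (G.degree_lt_card_verts v).le
    _ = (Fintype.card V : ℝ) ^ 2 := by simp [sq]

end SimpleGraph

theorem sum_rpow_le_of_sq_sum_le_mul {ι : Type*} [Fintype ι] [DecidableEq ι] {μ : ι → ℝ}
    (hμ : ∀ i, 0 ≤ μ i) {j : ι} {N : ℝ} (hcard : (Fintype.card ι : ℝ) ≤ N)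
    (hsum : ∑ i, μ i ≤ N ^ 2) (hj : (∑ i, μ i) ^ 2 ≤ N ^ 2 * μ j) {r : ℝ} (hr0 : 0 ≤ r)
    (hr1 : r ≤ 1) :
    ∑ i, μ i ^ r ≤ N ^ (1 - r) * (N ^ 2 / 4) ^ r + (N ^ 2) ^ r := by
  have hN : 0 < N := lt_of_lt_of_le (by exact_mod_cast Fintype.card_pos_iff.mpr ⟨j⟩) hcard
  have hrest : ∑ i ∈ univ.erase j, μ i = ∑ i, μ i - μ j := by
    rw [← add_sum_erase _ _ (mem_univ j)]; ring
  have hrest_le : ∑ i ∈ univ.erase j, μ i ≤ N ^ 2 / 4 := by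
    rw [hrest, le_div_iff₀ (by norm_num)]
    -- `N² (T - μ j) ≤ N² T - T² ≤ N⁴ / 4` with `T = ∑ i, μ i`
    nlinarith [sq_nonneg (N ^ 2 - 2 * ∑ i, μ i), pow_pos hN 2]
  have hj_le : μ j ≤ N ^ 2 :=
    (single_le_sum (fun i _ => hμ i) (mem_univ j)).trans hsum
  have hrest_nonneg : 0 ≤ ∑ i ∈ univ.erase j, μ i := sum_nonneg fun i _ => hμ i
  have hcard_erase : ((univ.erase j).card : ℝ) ≤ N :=
    le_trans (by exact_mod_cast card_le_univ _) hcard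
  calc ∑ i, μ i ^ r = μ j ^ r + ∑ i ∈ univ.erase j, μ i ^ r :=
        (add_sum_erase _ _ (mem_univ j)).symm
    _ ≤ (N ^ 2) ^ r + (#(univ.erase j) : ℝ) ^ (1 - r) * (∑ i ∈ univ.erase j, μ i) ^ r := by
        gcongr
        · exact hμ j
        · exact Real.sum_rpow_le_card_rpow_mul_rpow_sum _ (fun i _ => hμ i) hr0 hr1
    _ ≤ (N ^ 2) ^ r + N ^ (1 - r) * (N ^ 2 / 4) ^ r := by
        gcongr
    _ = N ^ (1 - r) * (N ^ 2 / 4) ^ r + (N ^ 2) ^ r := add_comm _ _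

theorem Real.rpow_one_sub_div_two_mul_sq_div_four_rpow {N : ℝ} (hN : 0 < N) (p : ℝ) :
    N ^ (1 - p / 2) * (N ^ 2 / 4) ^ (p / 2) = 2 ^ (-p) * N ^ (1 + p / 2) := by
  have hquarter : (N ^ 2 / 4) ^ (p / 2) = N ^ p * 2 ^ (-p) := by
    rw [show N ^ 2 / 4 = (N / 2) ^ 2 by ring, ← Real.rpow_natCast_mul (by positivity),
      Real.div_rpow hN.le zero_le_two, Real.rpow_neg zero_le_two]
    push_cast
    ring_nf
  rw [hquarter, mul_left_comm, ← mul_assoc, ← Real.rpow_add hN]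
  ring_nf

theorem Real.sq_rpow_div_two {x : ℝ} (hx : 0 ≤ x) (p : ℝ) : (x ^ 2) ^ (p / 2) = x ^ p := by
  rw [← Real.rpow_natCast_mul hx]
  push_cast
  ring_nf

/-- For `1 ≤ p < 2` and any graph of order `n`, `‖G‖_{S_p}^p ≤ 2^{-p} n^{1+p/2} + n^p`. -/
theorem schatten_le_absolute {n : ℕ} (G : SimpleGraph (Fin n)) [DecidableRel G.Adj]
    (p : ℝ) (hp1 : 1 ≤ p) (hp2 : p < 2) :
    ∑ i, gsval G i ^ p ≤ (2 : ℝ) ^ (-p) * (n : ℝ) ^ (1 + p / 2) + (n : ℝ) ^ p := by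
  rcases Nat.eq_zero_or_pos n with rfl | hn
  · simp only [univ_eq_empty, sum_empty, Nat.cast_zero]
    positivity
  have : Nonempty (Fin n) := ⟨⟨0, hn⟩⟩
  set A := G.adjMatrix ℝ
  set hA := isHermitian_mul_conjTranspose_self A
  have hμ : ∀ i, 0 ≤ hA.eigenvalues i := eigenvalues_self_mul_conjTranspose_nonneg A
  obtain ⟨j, hj⟩ := exists_eq_ciSup_of_finite (f := hA.eigenvalues)
  have htrace : ∑ i, hA.eigenvalues i = ∑ v, (G.degree v : ℝ) := by
    simpa using (hA.trace_eq_sum_eigenvalues).symm.trans G.trace_adjMatrix_mul_conjTranspose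
  have hsum : ∑ i, hA.eigenvalues i ≤ (n : ℝ) ^ 2 := by
    rw [htrace]
    simpa using G.sum_degree_le_card_sq
  have hdom : (∑ i, hA.eigenvalues i) ^ 2 ≤ (n : ℝ) ^ 2 * hA.eigenvalues j := by
    have := A.sq_sum_le_card_mul_card_mul_iSup_eigenvalues
    rw [G.sum_adjMatrix_apply, ← htrace, ← hj] at this
    simpa [sq] using this
  have hbound := sum_rpow_le_of_sq_sum_le_mul hμ (N := n) (by simp) hsum hdom
    (r := p / 2) (by linarith) (by linarith)
  have hnR : (0 : ℝ) < n := by exact_mod_cast hn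
  have hsval : ∀ i, gsval G i ^ p = hA.eigenvalues i ^ (p / 2) := fun i =>
    (Real.rpow_div_two_eq_sqrt p (hμ i)).symm
  rw [Real.rpow_one_sub_div_two_mul_sq_div_four_rpow hnR, Real.sq_rpow_div_two hnR.le] at hbound
  simpa only [hsval] using hbound
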